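/- Let (A,φ) and (B,ψ) be PCAs over Set. A functor F: Asm(A,φ) → Asm(B,ψ) is naturally isomorphic to Asm(f) for some applicative morphism f: (A,φ) → (B,ψ) if and only if: F preserves finite limits and regular epimorphisms; Γ_B ∘ F is naturally isomorphic to Γ_A; and F ∘ ∇_A is naturally isomorphic to ∇_B. -/

import Mathlib

open CategoryTheory

namespace PcaPaper

/-- A partial binary application on `A`. -/
abbrev PApp (A : Type) := A → A → Option A

variable {A B C : Type}

/-- Definedness of the application of inhabited subsets. -/
def SubDef (app : PApp A) (U V : Set A) : Prop :=
  ∀ a ∈ U, ∀ b ∈ V, (app a b).isSome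

/-- Application of subsets. -/
def SubApp (app : PApp A) (U V : Set A) : Set A :=
  {c | ∃ a ∈ U, ∃ b ∈ V, app a b = some c}

/-- Terms with `n` variables, built from variables by application. -/
inductive Term (n : ℕ) : Type
  | var : Fin n → Term n
  | op : Term n → Term n → Term n

/-- Evaluation of a term at a vector of elements, as a partial function. -/
def Term.eval (app : PApp A) : {n : ℕ} → Term n → (Fin n → A) → Option A
  | _, .var i, ρ => some (ρ i)
  | _, .op s t, ρ => (Term.eval app s ρ).bind fun x => (Term.eval app t ρ).bind fun y => app x y

/-- Evaluation of a term at a vector of subsets. -/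
def Term.subEval (app : PApp A) : {n : ℕ} → Term n → (Fin n → Set A) → Set A
  | _, .var i, ρ => ρ i
  | _, .op s t, ρ => SubApp app (Term.subEval app s ρ) (Term.subEval app t ρ)

/-- Definedness of the evaluation of a term at a vector of subsets. -/
def Term.subDef (app : PApp A) : {n : ℕ} → Term n → (Fin n → Set A) → Prop
  | _, .var _, _ => True
  | _, .op s t, ρ => Term.subDef app s ρ ∧ Term.subDef app t ρ ∧
      SubDef app (Term.subEval app s ρ) (Term.subEval app t ρ)

/-- `r · a 0 · … · a (k-1)`, associated to the left. -/
def appVec (app : PApp A) (r : A) : (k : ℕ) → (Fin k → A) → Option A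
  | 0, _ => some r
  | k + 1, a => (appVec app r k fun i => a i.castSucc).bind fun s => app s (a (Fin.last k))

/-- `U` realizes `λ x₀ … xₙ. t`. -/
def Realizes (app : PApp A) (U : Set A) {n : ℕ} (t : Term (n + 1)) : Prop :=
  ∀ r ∈ U, ∀ a : Fin (n + 1) → A,
    (appVec app r n fun i => a i.castSucc).isSome ∧
    ∀ b, Term.eval app t a = some b → appVec app r (n + 1) a = some b

/-- A filter of inhabited subsets on a partial applicative structure. -/
structure IsPcaFilter (app : PApp A) (φ : Set (Set A)) : Prop where
  nonempty : ∀ U ∈ φ, U.Nonempty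
  upward : ∀ U ∈ φ, ∀ V : Set A, U ⊆ V → V ∈ φ
  appClosed : ∀ U ∈ φ, ∀ V ∈ φ, SubDef app U V → SubApp app U V ∈ φ

/-- Combinatorial completeness of a set of subsets. -/
def CombComplete (app : PApp A) (G : Set (Set A)) : Prop :=
  ∀ (n : ℕ) (t : Term (n + 1)), ∃ U ∈ G, Realizes app U t

/-- The least filter containing `G`. -/
def genFilter (app : PApp A) (G : Set (Set A)) : Set (Set A) :=
  ⋂₀ {ψ | IsPcaFilter app ψ ∧ G ⊆ ψ}

/-- A (relative) PCA over the base category `Set`: a nonempty set with a partial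
binary application and a combinatorially complete filter of inhabited subsets. -/
structure PCA (A : Type) where
  app : PApp A
  nonemptyCarrier : Nonempty A
  filt : Set (Set A)
  isFilter : IsPcaFilter app filt
  complete : CombComplete app filt

/- ### Helper lemmas -/

lemma isSome_bind_left {α β : Type} {o : Option α} {f : α → Option β}
    (h : (o.bind f).isSome) : o.isSome := by
  cases o <;> simp_all

lemma appVec_two_pre (app : PApp A) (r u v x : A) :
    (appVec app r 2 fun i => (![u, v, x] : Fin 3 → A) i.castSucc)
      = (app r u).bind fun s => app s v := rfl

lemma appVec_three_cons (app : PApp A) (r u v x : A) :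
    appVec app r (2 + 1) ![u, v, x]
      = ((app r u).bind fun s => app s v).bind fun s => app s x := rfl

lemma eval_comp_term (app : PApp A) (u v x : A) :
    Term.eval app (Term.op (.var 1) (.op (.var 0) (.var 2))) ![u, v, x]
      = (app u x).bind fun y => app v y := by
  simp [Term.eval]

lemma eval_app2_term (app : PApp A) (u v x : A) :
    Term.eval app (Term.op (.op (.var 0) (.var 1)) (.var 2)) ![u, v, x]
      = (app u v).bind fun d => app d x := by
  simp [Term.eval]

lemma filt_nonempty (P : PCA A) : ∃ U, U ∈ P.filt := by
  obtain ⟨U, hU, -⟩ := P.complete 0 (.var 0)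
  exact ⟨U, hU⟩

lemma univ_mem_filt (P : PCA A) : (Set.univ : Set A) ∈ P.filt := by
  obtain ⟨U, hU⟩ := filt_nonempty P
  exact P.isFilter.upward U hU _ (Set.subset_univ U)

lemma exists_ireal (P : PCA A) :
    ∃ U ∈ P.filt, ∀ r ∈ U, ∀ a : A, P.app r a = some a := by
  obtain ⟨U, hU, hreal⟩ := P.complete 0 (.var 0)
  refine ⟨U, hU, fun r hr a => ?_⟩
  have h := (hreal r hr fun _ => a).2 a (by simp [Term.eval])
  simpa [appVec] using h

lemma realizes3_chain (P : PCA A) {T : Set A} {t : Term (2 + 1)}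
    (hreal : Realizes P.app T t) {r : A} (hr : r ∈ T) (u v : A) :
    ∃ s w, P.app r u = some s ∧ P.app s v = some w := by
  have h1 : ((P.app r u).bind fun s => P.app s v).isSome := by
    have h := (hreal r hr ![u, v, v]).1
    rwa [appVec_two_pre] at h
  cases hru : P.app r u with
  | none => rw [hru] at h1; simp at h1
  | some s =>
    rw [hru] at h1
    simp only [Option.bind_some] at h1
    obtain ⟨w, hw⟩ := Option.isSome_iff_exists.mp h1
    exact ⟨s, w, rfl, hw⟩

lemma exists_tracker3 (P : PCA A) (t : Term (2 + 1)) {U V : Set A}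
    (hU : U ∈ P.filt) (hV : V ∈ P.filt) :
    ∃ W ∈ P.filt, ∀ w ∈ W, ∃ u ∈ U, ∃ v ∈ V,
      ∀ x c : A, Term.eval P.app t ![u, v, x] = some c → P.app w x = some c := by
  obtain ⟨T, hT, hreal⟩ := P.complete 2 t
  have hdef1 : SubDef P.app T U := by
    intro r hr u _
    obtain ⟨s, w, hs, -⟩ := realizes3_chain P hreal hr u u
    simp [hs]
  have hTU := P.isFilter.appClosed T hT U hU hdef1
  have hdef2 : SubDef P.app (SubApp P.app T U) V := by
    rintro s ⟨r, hr, u, hu, hru⟩ v _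
    obtain ⟨s', w, hs', hw⟩ := realizes3_chain P hreal hr u v
    rw [hru] at hs'
    injection hs' with h
    subst h
    simp [hw]
  refine ⟨SubApp P.app (SubApp P.app T U) V,
    P.isFilter.appClosed _ hTU V hV hdef2, ?_⟩
  rintro w ⟨s, ⟨r, hr, u, hu, hru⟩, v, hv, hsv⟩
  refine ⟨u, hu, v, hv, fun x c hc => ?_⟩
  have h2 : appVec P.app r (2 + 1) ![u, v, x] = some c := (hreal r hr ![u, v, x]).2 c hc
  rw [appVec_three_cons, hru] at h2
  simp only [Option.bind_some] at h2
  rw [hsv] at h2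
  simpa using h2

/- ### Assemblies -/

/-- An assembly over a PCA `(A, φ)`. -/
structure Asm {A : Type} (P : PCA A) : Type 1 where
  carrier : Type
  E : carrier → A → Prop
  total : ∀ x, ∃ a, E x a

/-- `U` tracks the function `f` between (the carriers of) two assemblies. -/
def Tracks (P : PCA A) {X Y : Asm P} (U : Set A) (f : X.carrier → Y.carrier) : Prop :=
  ∀ x a r, X.E x a → r ∈ U → ∃ b, P.app r a = some b ∧ Y.E (f x) b

/-- The category of assemblies over a PCA. -/
instance asmCategory (P : PCA A) : Category (Asm P) where
  Hom X Y := {f : X.carrier → Y.carrier // ∃ U ∈ P.filt, Tracks P U f}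
  id X := ⟨fun x => x, by
    obtain ⟨U, hU, hI⟩ := exists_ireal P
    exact ⟨U, hU, fun x a r hx hr => ⟨a, hI r hr a, hx⟩⟩⟩
  comp {X Y Z} f g := ⟨fun x => g.1 (f.1 x), by
    obtain ⟨U, hU, hf⟩ := f.2
    obtain ⟨V, hV, hg⟩ := g.2
    obtain ⟨W, hW, hkey⟩ := exists_tracker3 P
      (Term.op (.var 1) (.op (.var 0) (.var 2))) hU hV
    refine ⟨W, hW, fun x a w hx hw => ?_⟩
    obtain ⟨u, hu, v, hv, key⟩ := hkey w hw
    obtain ⟨b, hb, hYb⟩ := hf x a u hx hu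
    obtain ⟨c, hc, hZc⟩ := hg (f.1 x) b v hYb hv
    refine ⟨c, key a c ?_, hZc⟩
    rw [eval_comp_term, hb]
    simpa using hc⟩
  id_comp f := Subtype.ext rfl
  comp_id f := Subtype.ext rfl
  assoc f g h := Subtype.ext rfl

/-- The global-sections-like functor `Γ : Asm(A,φ) ⥤ Set`. -/
def Gam (P : PCA A) : Asm P ⥤ Type where
  obj X := X.carrier
  map f := TypeCat.ofHom f.1
  map_id _ := rfl
  map_comp _ _ := rfl

/-- The constant-object assembly `∇ Y`. -/
def nablaObj (P : PCA A) (Y : Type) : Asm P where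
  carrier := Y
  E := fun _ _ => True
  total := fun _ => P.nonemptyCarrier.elim fun a => ⟨a, trivial⟩

/-- The functor `∇ : Set ⥤ Asm(A,φ)`. -/
def Nab (P : PCA A) : Type ⥤ Asm P where
  obj Y := nablaObj P Y
  map {Y Z} f := ⟨f, by
    obtain ⟨U, hU, hI⟩ := exists_ireal P
    exact ⟨U, hU, fun y a r _ hr => ⟨a, hI r hr a, trivial⟩⟩⟩
  map_id _ := Subtype.ext rfl
  map_comp _ _ := Subtype.ext rfl

/- ### Applicative morphisms -/

/-- The image of a subset under a relation. -/
def relImage (f : A → B → Prop) (V : Set A) : Set B :=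
  {b | ∃ a ∈ V, f a b}

/-- `U` tracks the relation `f` as an applicative (pre)morphism. -/
def Tracks₂ (appA : PApp A) (appB : PApp B) (U : Set B) (f : A → B → Prop) : Prop :=
  ∀ a a' c, appA a a' = some c → ∀ b b', f a b → f a' b' → ∀ r ∈ U,
    ∃ d e, appB r b = some d ∧ appB d b' = some e ∧ f c e

/-- `f ⊆ A × B` is an applicative morphism `(A,φ) → (B,ψ)`. -/
structure IsAppMor (appA : PApp A) (φ : Set (Set A)) (appB : PApp B) (ψ : Set (Set B))
    (f : A → B → Prop) : Prop where
  total : ∀ a, ∃ b, f a b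
  tracked : ∃ U ∈ ψ, Tracks₂ appA appB U f
  image : ∀ V ∈ φ, relImage f V ∈ ψ

/-- The preorder `f ≤ f'` on relations `A × B`, relative to `(B,ψ)`. -/
def RelLe (appB : PApp B) (ψ : Set (Set B)) (f f' : A → B → Prop) : Prop :=
  ∃ U ∈ ψ, ∀ a b, f a b → ∀ r ∈ U, ∃ c, appB r b = some c ∧ f' a c

/-- Relational composition: `(RelComp g f) a c ↔ ∃ b, f a b ∧ g b c`. -/
def RelComp (g : B → C → Prop) (f : A → B → Prop) : A → C → Prop :=
  fun a c => ∃ b, f a b ∧ g b c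

/-- The diagonal (identity) relation `δ_A`. -/
def relId (A : Type) : A → A → Prop := fun a b => a = b

/- ### The functor Asm(f) induced by an applicative morphism -/

/-- The action of an applicative morphism on an assembly. -/
def asmObj (P : PCA A) (Q : PCA B) (f : A → B → Prop) (htot : ∀ a, ∃ b, f a b)
    (X : Asm P) : Asm Q where
  carrier := X.carrier
  E := fun x b => ∃ a, X.E x a ∧ f a b
  total := fun x => by
    obtain ⟨a, ha⟩ := X.total x
    obtain ⟨b, hb⟩ := htot a
    exact ⟨b, a, ha, hb⟩

lemma tracks_asmMap {P : PCA A} {Q : PCA B} {f : A → B → Prop}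
    (hf : IsAppMor P.app P.filt Q.app Q.filt f) {X Y : Asm P}
    (g : X.carrier → Y.carrier) (hg : ∃ U ∈ P.filt, Tracks P U g) :
    ∃ W ∈ Q.filt,
      Tracks Q (X := asmObj P Q f hf.total X) (Y := asmObj P Q f hf.total Y) W g := by
  obtain ⟨U, hU, hgU⟩ := hg
  obtain ⟨T, hT, hfT⟩ := hf.tracked
  have hfU : relImage f U ∈ Q.filt := hf.image U hU
  obtain ⟨W, hW, hkey⟩ := exists_tracker3 Q
    (Term.op (.op (.var 0) (.var 1)) (.var 2)) hT hfU
  refine ⟨W, hW, ?_⟩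
  rintro x b w ⟨a, hxa, hab⟩ hw
  obtain ⟨v, hv, y, hy, key⟩ := hkey w hw
  obtain ⟨u, hu, huy⟩ := hy
  obtain ⟨a', ha', hEa'⟩ := hgU x a u hxa hu
  obtain ⟨d, e, hd, he, hfe⟩ := hfT u a a' ha' y b huy hab v hv
  refine ⟨e, key b e ?_, a', hEa', hfe⟩
  rw [eval_app2_term, hd]
  simpa using he

/-- The functor `Asm(f) : Asm(A,φ) ⥤ Asm(B,ψ)` induced by an applicative morphism. -/
def asmFunctor {P : PCA A} {Q : PCA B} {f : A → B → Prop}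
    (hf : IsAppMor P.app P.filt Q.app Q.filt f) : Asm P ⥤ Asm Q where
  obj X := asmObj P Q f hf.total X
  map {X Y} g := ⟨g.1, tracks_asmMap hf g.1 g.2⟩
  map_id _ := Subtype.ext rfl
  map_comp _ _ := Subtype.ext rfl
/- ### Products of PASs -/

/-- Coordinatewise partial application on `A × B`. -/
def prodApp (appA : PApp A) (appB : PApp B) : PApp (A × B) := fun p q =>
  (appA p.1 q.1).bind fun x => (appB p.2 q.2).bind fun y => some (x, y)

/-- The set `φ × ψ` of rectangles `U ×ˢ V` with `U ∈ φ` and `V ∈ ψ`. -/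
def prodFiltSet (φ : Set (Set A)) (ψ : Set (Set B)) : Set (Set (A × B)) :=
  {W | ∃ U ∈ φ, ∃ V ∈ ψ, W = U ×ˢ V}

/-- The filter `⟨φ × ψ⟩` of the pseudocoproduct of two PCAs. -/
def prodFilt (P : PCA A) (Q : PCA B) : Set (Set (A × B)) :=
  genFilter (prodApp P.app Q.app) (prodFiltSet P.filt Q.filt)

/- ### Quasi-surjectivity and computational density -/

/-- A quasi-surjective applicative morphism. -/
def QuasiSurjective (P : PCA A) (Q : PCA B) (f : A → B → Prop) : Prop :=
  ∃ N ∈ Q.filt, ∀ U ∈ Q.filt, ∃ V ∈ P.filt,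
    ∀ n ∈ N, ∀ b ∈ relImage f V, ∃ c, Q.app n b = some c ∧ c ∈ U

/-- A computationally dense applicative morphism. -/
def CompDense (P : PCA A) (Q : PCA B) (f : A → B → Prop) : Prop :=
  ∃ M ∈ Q.filt, ∀ U ∈ Q.filt, ∃ V ∈ P.filt,
    (∀ r ∈ V, ∀ a : A, (P.app r a).isSome) ∧
    (∀ r ∈ V, ∀ a a', P.app r a = some a' →
      (∀ u ∈ U, ∀ b, f a b → (Q.app u b).isSome) →
      ∀ m ∈ M, ∀ b', f a' b' →
        ∃ c, Q.app m b' = some c ∧ ∃ u ∈ U, ∃ b'', f a b'' ∧ Q.app u b'' = some c)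

/- ### Slicing: fiberwise filters over an assembly -/

/-- Fiberwise definedness of the application of two subsets of `I × A`. -/
def fibSubDef (app : PApp A) {I : Type} (U V : Set (I × A)) : Prop :=
  ∀ i r s, (i, r) ∈ U → (i, s) ∈ V → (app r s).isSome

/-- Fiberwise application of two subsets of `I × A`. -/
def fibSubApp (app : PApp A) {I : Type} (U V : Set (I × A)) : Set (I × A) :=
  {p | ∃ r s, (p.1, r) ∈ U ∧ (p.1, s) ∈ V ∧ app r s = some p.2}

/-- A fiberwise filter over `I`. -/
structure IsFibFilter (app : PApp A) (I : Type) (Ψ : Set (Set (I × A))) : Prop where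
  inhab : ∀ U ∈ Ψ, ∀ i : I, ∃ a, (i, a) ∈ U
  upward : ∀ U ∈ Ψ, ∀ V : Set (I × A), U ⊆ V → V ∈ Ψ
  appClosed : ∀ U ∈ Ψ, ∀ V ∈ Ψ, fibSubDef app U V → fibSubApp app U V ∈ Ψ

/-- The filter `φ_I` of the slice PCA over an assembly `I`: the least fiberwise filter
containing `E_I` and all sets `|I| × V` for `V ∈ φ`. -/
def sliceFilt (P : PCA A) (I : Asm P) : Set (Set (I.carrier × A)) :=
  ⋂₀ {Ψ | IsFibFilter P.app I.carrier Ψ ∧ {p : I.carrier × A | I.E p.1 p.2} ∈ Ψ ∧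
      ∀ V ∈ P.filt, {p : I.carrier × A | p.2 ∈ V} ∈ Ψ}

lemma sliceFilt_upward {P : PCA A} {I : Asm P} {U V : Set (I.carrier × A)}
    (hU : U ∈ sliceFilt P I) (hUV : U ⊆ V) : V ∈ sliceFilt P I := by
  rw [sliceFilt, Set.mem_sInter] at hU ⊢
  intro Ψ hΨ
  exact hΨ.1.upward U (hU Ψ hΨ) V hUV

lemma sliceFilt_appClosed {P : PCA A} {I : Asm P} {U V : Set (I.carrier × A)}
    (hU : U ∈ sliceFilt P I) (hV : V ∈ sliceFilt P I) (hdef : fibSubDef P.app U V) :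
    fibSubApp P.app U V ∈ sliceFilt P I := by
  rw [sliceFilt, Set.mem_sInter] at hU hV ⊢
  intro Ψ hΨ
  exact hΨ.1.appClosed U (hU Ψ hΨ) V (hV Ψ hΨ) hdef

lemma base_mem_sliceFilt {P : PCA A} {I : Asm P} {V : Set A} (hV : V ∈ P.filt) :
    {p : I.carrier × A | p.2 ∈ V} ∈ sliceFilt P I := by
  rw [sliceFilt, Set.mem_sInter]
  intro Ψ hΨ
  exact hΨ.2.2 V hV

lemma EI_mem_sliceFilt (P : PCA A) (I : Asm P) :
    {p : I.carrier × A | I.E p.1 p.2} ∈ sliceFilt P I := by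
  rw [sliceFilt, Set.mem_sInter]
  intro Ψ hΨ
  exact hΨ.2.1

lemma exists_fib_tracker3 (P : PCA A) (I : Asm P) (t : Term (2 + 1))
    {U V : Set (I.carrier × A)} (hU : U ∈ sliceFilt P I) (hV : V ∈ sliceFilt P I) :
    ∃ W ∈ sliceFilt P I, ∀ i w, (i, w) ∈ W → ∃ u v, (i, u) ∈ U ∧ (i, v) ∈ V ∧
      ∀ x c : A, Term.eval P.app t ![u, v, x] = some c → P.app w x = some c := by
  obtain ⟨T, hT, hreal⟩ := P.complete 2 t
  have hT' : {p : I.carrier × A | p.2 ∈ T} ∈ sliceFilt P I := base_mem_sliceFilt hT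
  have hdef1 : fibSubDef P.app {p : I.carrier × A | p.2 ∈ T} U := by
    intro i r s hr _
    obtain ⟨s', w', h1, -⟩ := realizes3_chain P hreal hr s s
    simp [h1]
  have h1mem := sliceFilt_appClosed hT' hU hdef1
  have hdef2 : fibSubDef P.app (fibSubApp P.app {p : I.carrier × A | p.2 ∈ T} U) V := by
    rintro i s v ⟨r, u, hr, hu, hru⟩ _
    obtain ⟨s', w', hs', hw'⟩ := realizes3_chain P hreal hr u v
    rw [hru] at hs'
    injection hs' with h
    subst h
    simp [hw']
  refine ⟨_, sliceFilt_appClosed h1mem hV hdef2, ?_⟩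
  rintro i w ⟨s, v, ⟨r, u, hr, hu, hru⟩, hv, hsv⟩
  refine ⟨u, v, hu, hv, fun x c hc => ?_⟩
  have h2 : appVec P.app r (2 + 1) ![u, v, x] = some c := (hreal r hr ![u, v, x]).2 c hc
  rw [appVec_three_cons, hru] at h2
  simp only [Option.bind_some] at h2
  rw [hsv] at h2
  simpa using h2

/- ### The category of assemblies over the slice PCA `(A,φ)/I` -/

/-- Assemblies over the slice PCA `(A,φ)/I`. -/
structure SliceAsm (P : PCA A) (I : Asm P) : Type 1 where
  carrier : Type
  k : carrier → I.carrier
  E : carrier → A → Prop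
  total : ∀ x, ∃ a, E x a

/-- Fiberwise tracking for morphisms of assemblies over `(A,φ)/I`. -/
def SliceTracks (P : PCA A) (I : Asm P) {X Y : SliceAsm P I} (U : Set (I.carrier × A))
    (f : X.carrier → Y.carrier) : Prop :=
  ∀ x a r, X.E x a → (X.k x, r) ∈ U → ∃ b, P.app r a = some b ∧ Y.E (f x) b

instance sliceAsmCategory (P : PCA A) (I : Asm P) : Category (SliceAsm P I) where
  Hom X Y := {f : X.carrier → Y.carrier //
    (∀ x, Y.k (f x) = X.k x) ∧ ∃ U ∈ sliceFilt P I, SliceTracks P I U f}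
  id X := ⟨fun x => x, fun _ => rfl, by
    obtain ⟨U, hU, hI⟩ := exists_ireal P
    exact ⟨{p | p.2 ∈ U}, base_mem_sliceFilt hU,
      fun x a r hx hr => ⟨a, hI r hr a, hx⟩⟩⟩
  comp {X Y Z} f g := ⟨fun x => g.1 (f.1 x), fun x => (g.2.1 (f.1 x)).trans (f.2.1 x), by
    obtain ⟨U, hU, hf⟩ := f.2.2
    obtain ⟨V, hV, hg⟩ := g.2.2
    obtain ⟨W, hW, hkey⟩ := exists_fib_tracker3 P I
      (Term.op (.var 1) (.op (.var 0) (.var 2))) hU hV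
    refine ⟨W, hW, fun x a w hx hw => ?_⟩
    obtain ⟨u, v, hu, hv, key⟩ := hkey (X.k x) w hw
    obtain ⟨b, hb, hYb⟩ := hf x a u hx hu
    have hv' : (Y.k (f.1 x), v) ∈ V := by rw [f.2.1 x]; exact hv
    obtain ⟨c, hc, hZc⟩ := hg (f.1 x) b v hYb hv'
    refine ⟨c, key a c ?_, hZc⟩
    rw [eval_comp_term, hb]
    simpa using hc⟩
  id_comp f := Subtype.ext rfl
  comp_id f := Subtype.ext rfl
  assoc f g h := Subtype.ext rfl

/- ### Families of assemblies (products of PCAs) -/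

/-- The category of families of assemblies over a family of PCAs, with uniformly
tracked families of morphisms; this is the category of assemblies over the product
PCA of the family, taken over the product of the base categories. -/
structure FamAsm {I : Type} {A : I → Type} (P : ∀ i, PCA (A i)) : Type 1 where
  obj : ∀ i, Asm (P i)

instance famAsmCategory {I : Type} {A : I → Type} (P : ∀ i, PCA (A i)) :
    Category (FamAsm P) where
  Hom X Y := {f : ∀ i, (X.obj i).carrier → (Y.obj i).carrier //
    ∃ U : ∀ i, Set (A i), (∀ i, U i ∈ (P i).filt) ∧ ∀ i, Tracks (P i) (U i) (f i)}
  id X := ⟨fun i x => x, by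
    choose U hU using fun i => exists_ireal (P i)
    exact ⟨U, fun i => (hU i).1, fun i x a r hx hr => ⟨a, (hU i).2 r hr a, hx⟩⟩⟩
  comp {X Y Z} f g := ⟨fun i x => g.1 i (f.1 i x), by
    obtain ⟨U, hU, hf⟩ := f.2
    obtain ⟨V, hV, hg⟩ := g.2
    choose W hW using fun i => exists_tracker3 (P i)
      (Term.op (.var 1) (.op (.var 0) (.var 2))) (hU i) (hV i)
    refine ⟨W, fun i => (hW i).1, fun i x a w hx hw => ?_⟩
    obtain ⟨u, hu, v, hv, key⟩ := (hW i).2 w hw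
    obtain ⟨b, hb, hYb⟩ := hf i x a u hx hu
    obtain ⟨c, hc, hZc⟩ := hg i (f.1 i x) b v hYb hv
    refine ⟨c, key a c ?_, hZc⟩
    rw [eval_comp_term, hb]
    simpa using hc⟩
  id_comp f := Subtype.ext rfl
  comp_id f := Subtype.ext rfl
  assoc f g h := Subtype.ext rfl

/-!
Finite limits of assemblies are computed on carriers (products are realized by pairing codes,
subassemblies by restricting the realizability relation), and a morphism `e` is a regular
epimorphism exactly when realizers of points of the codomain can be uniformly turned into
realizers of preimages. Since `Asm(f)` is the identity on carriers, these descriptions show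
that it is regular and commutes with `Γ` and `∇`.

Conversely, `Γ_B ∘ F ≅ Γ_A` identifies the carrier of `F X` with that of `X`, and `f` is read
off from the assembly `A*` of realizers: `f a b` holds when `b` realizes `a` in `F A*`.
Because `F` preserves products and the subassembly of `A* × A*` on which application is
defined, application of `A` is tracked after applying `F`, so `f` is tracked. Preservation of
regular epimorphisms together with `F ∇ ≅ ∇` shows that `f` maps filter sets to filter sets,
and covering `X` by its graph `{(x, a) | a realizes x} ⊆ ∇X × A*` yields `F X ≅ Asm(f) X`.
-/

section Combinatory

variable (R : PCA A)

lemma appVec_add (app : PApp A) (r : A) (n : ℕ) :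
    ∀ (m : ℕ) (a : Fin (n + m) → A),
      appVec app r (n + m) a =
        (appVec app r n fun i => a (Fin.castAdd m i)).bind
          fun w => appVec app w m fun j => a (Fin.natAdd n j)
  | 0, a => by
    change appVec app r n a = (appVec app r n a).bind some
    cases appVec app r n a <;> rfl
  | m + 1, a => by
    change (appVec app r (n + m) fun i => a i.castSucc).bind (fun s => app s (a (Fin.last _))) = _
    rw [appVec_add app r n m, Option.bind_assoc]
    rfl

lemma exists_appVec_mem_filt {T : Set A} (hT : T ∈ R.filt) :
    ∀ {n : ℕ} (U : Fin n → Set A), (∀ i, U i ∈ R.filt) →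
      (∀ r ∈ T, ∀ u : Fin n → A, (appVec R.app r n u).isSome) →
      ∃ W ∈ R.filt, ∀ w ∈ W, ∃ r ∈ T, ∃ u : Fin n → A,
        (∀ i, u i ∈ U i) ∧ appVec R.app r n u = some w
  | 0, _, _, _ => ⟨T, hT, fun w hw => ⟨w, hw, Fin.elim0, fun i => i.elim0, rfl⟩⟩
  | n + 1, U, hU, hdef => by
    obtain ⟨d⟩ := R.nonemptyCarrier
    obtain ⟨W, hW, hWspec⟩ := exists_appVec_mem_filt hT (fun i => U i.castSucc) (fun i => hU _)
      fun r hr u => isSome_bind_left (by simpa [appVec] using hdef r hr (Fin.snoc u d))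
    have key : ∀ w ∈ W, ∀ v ∈ U (Fin.last n), ∃ r ∈ T, ∃ u : Fin (n + 1) → A,
        (∀ i, u i ∈ U i) ∧ appVec R.app r (n + 1) u = R.app w v := by
      intro w hw v hv
      obtain ⟨r, hr, u, hu, hru⟩ := hWspec w hw
      refine ⟨r, hr, Fin.snoc u v, fun i => ?_, ?_⟩
      · induction i using Fin.lastCases with
        | last => simpa using hv
        | cast i => simpa using hu i
      · change (appVec R.app r n fun i => (Fin.snoc u v : Fin (n + 1) → A) i.castSucc).bind _ = _
        simp only [Fin.snoc_castSucc, Fin.snoc_last, hru, Option.bind_some]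
    refine ⟨SubApp R.app W (U (Fin.last n)), R.isFilter.appClosed _ hW _ (hU _) ?_, ?_⟩
    · intro w hw v hv
      obtain ⟨r, hr, u, -, hru⟩ := key w hw v hv
      exact hru ▸ hdef r hr u
    · rintro w ⟨w', hw', v, hv, hwv⟩
      obtain ⟨r, hr, u, hu, hru⟩ := key w' hw' v hv
      exact ⟨r, hr, u, hu, hru.trans hwv⟩

/-- Combinatory completeness with the first `n` variables instantiated from filter sets. -/
lemma exists_tracker_of_term {n m : ℕ} (t : Term (n + (m + 1))) (U : Fin n → Set A)
    (hU : ∀ i, U i ∈ R.filt) :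
    ∃ W ∈ R.filt, ∀ w ∈ W, ∃ u : Fin n → A, (∀ i, u i ∈ U i) ∧
      ∀ a : Fin (n + (m + 1)) → A, (∀ i, a (Fin.castAdd (m + 1) i) = u i) →
        ∀ c, Term.eval R.app t a = some c →
          appVec R.app w (m + 1) (fun j => a (Fin.natAdd n j)) = some c := by
  obtain ⟨d⟩ := R.nonemptyCarrier
  obtain ⟨T, hT, hreal⟩ := R.complete (n + m) t
  have hdef : ∀ r ∈ T, ∀ u : Fin n → A, (appVec R.app r n u).isSome := by
    intro r hr u
    have h := (hreal r hr (Fin.append u fun _ : Fin (m + 1) => d :)).1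
    rw [appVec_add] at h
    have hcast (i : Fin n) : (Fin.castAdd m i).castSucc = Fin.castAdd (m + 1) i := rfl
    simpa [hcast, Fin.append_left] using isSome_bind_left h
  obtain ⟨W, hW, hWspec⟩ := exists_appVec_mem_filt R hT U hU hdef
  refine ⟨W, hW, fun w hw => ?_⟩
  obtain ⟨r, hr, u, hu, hru⟩ := hWspec w hw
  refine ⟨u, hu, fun a ha c hc => ?_⟩
  have h : appVec R.app r (n + (m + 1)) a = some c := (hreal r hr a).2 c hc
  rwa [appVec_add R.app r n (m + 1), show (fun i => a (Fin.castAdd (m + 1) i)) = u from funext ha,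
    hru, Option.bind_some] at h

lemma exists_proj_combinator (i : Fin 2) : ∃ K ∈ R.filt, ∀ k ∈ K, ∀ x : A,
    ∃ d, R.app k x = some d ∧ ∀ y, R.app d y = some (![x, y] i) := by
  obtain ⟨K, hK, hreal⟩ := R.complete 1 (.var i)
  refine ⟨K, hK, fun k hk x => ?_⟩
  obtain ⟨d, hd⟩ : ∃ d, R.app k x = some d :=
    Option.isSome_iff_exists.mp (hreal k hk ![x, x]).1
  refine ⟨d, hd, fun y => ?_⟩
  have h : appVec R.app k 2 ![x, y] = some (![x, y] i) :=
    (hreal k hk ![x, y]).2 _ (by simp [Term.eval])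
  rwa [show appVec R.app k 2 ![x, y] = (R.app k x).bind fun s => R.app s y from rfl, hd,
    Option.bind_some] at h

lemma exists_pairing_combinator : ∃ Pr ∈ R.filt, ∀ p ∈ Pr, ∀ x y : A,
    ∃ w, (R.app p x).bind (fun s => R.app s y) = some w ∧
      ∀ z c, (R.app z x).bind (fun s => R.app s y) = some c → R.app w z = some c := by
  obtain ⟨Pr, hPr, hreal⟩ := R.complete 2 (.op (.op (.var 2) (.var 0)) (.var 1))
  refine ⟨Pr, hPr, fun p hp x y => ?_⟩
  have h1 := (hreal p hp ![x, y, y]).1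
  rw [appVec_two_pre] at h1
  obtain ⟨w, hw⟩ := Option.isSome_iff_exists.mp h1
  refine ⟨w, hw, fun z c hc => ?_⟩
  have h2 : appVec R.app p (2 + 1) ![x, y, z] = some c :=
    (hreal p hp ![x, y, z]).2 c (by simpa [Term.eval] using hc)
  rwa [appVec_three_cons, hw, Option.bind_some] at h2

/-- Realizers of `λ x y. x` (for `i = 0`) and of `λ x y. y` (for `i = 1`). -/
noncomputable def projSet (i : Fin 2) : Set A := (exists_proj_combinator R i).choose

lemma projSet_mem (i : Fin 2) : projSet R i ∈ R.filt := (exists_proj_combinator R i).choose_spec.1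

lemma projSet_app (i : Fin 2) : ∀ k ∈ projSet R i, ∀ x : A,
    ∃ d, R.app k x = some d ∧ ∀ y, R.app d y = some (![x, y] i) :=
  (exists_proj_combinator R i).choose_spec.2

/-- Realizers of `λ x y z. z x y`. -/
noncomputable def pairSet : Set A := (exists_pairing_combinator R).choose

lemma pairSet_mem : pairSet R ∈ R.filt := (exists_pairing_combinator R).choose_spec.1

lemma pairSet_app : ∀ p ∈ pairSet R, ∀ x y : A,
    ∃ w, (R.app p x).bind (fun s => R.app s y) = some w ∧
      ∀ z c, (R.app z x).bind (fun s => R.app s y) = some c → R.app w z = some c :=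
  (exists_pairing_combinator R).choose_spec.2

def PairCode (a b c : A) : Prop :=
  ∃ p ∈ pairSet R, (R.app p a).bind (fun s => R.app s b) = some c

variable {R}

lemma PairCode.exists (a b : A) : ∃ c, PairCode R a b c := by
  obtain ⟨p, hp⟩ := R.isFilter.nonempty _ (pairSet_mem R)
  obtain ⟨w, hw, -⟩ := pairSet_app R p hp a b
  exact ⟨w, p, hp, hw⟩

lemma PairCode.proj {a b c : A} (h : PairCode R a b c) (i : Fin 2) :
    ∀ k ∈ projSet R i, R.app c k = some (![a, b] i) := by
  intro k hk
  obtain ⟨p, hp, hc⟩ := h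
  obtain ⟨w, hw, hspec⟩ := pairSet_app R p hp a b
  obtain ⟨d, hd, hdy⟩ := projSet_app R i k hk a
  rw [hc] at hw
  cases hw
  exact hspec k _ (by rw [hd, Option.bind_some]; exact hdy b)

variable (R)

lemma exists_pairProj_tracker (i : Fin 2) : ∃ W ∈ R.filt, ∀ w ∈ W, ∀ a b c : A,
    PairCode R a b c → R.app w c = some (![a, b] i) := by
  obtain ⟨W, hW, hspec⟩ := exists_tracker_of_term R (n := 1) (m := 0) (.op (.var 1) (.var 0))
    ![projSet R i] fun j => by fin_cases j; exact projSet_mem R i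
  refine ⟨W, hW, fun w hw a b c hc => ?_⟩
  obtain ⟨u, hu, hkey⟩ := hspec w hw
  exact hkey ![u 0, c] (by intro j; fin_cases j; rfl) _
    (by simpa [Term.eval] using hc.proj i (u 0) (hu 0))

lemma mem_filt_of_forall_app {U S S' : Set A} (hU : U ∈ R.filt) (hS : S ∈ R.filt)
    (h : ∀ r ∈ U, ∀ s ∈ S, ∃ t ∈ S', R.app r s = some t) : S' ∈ R.filt := by
  refine R.isFilter.upward _ (R.isFilter.appClosed U hU S hS fun r hr s hs => ?_) S' ?_
  · obtain ⟨t, -, ht⟩ := h r hr s hs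
    simp [ht]
  · rintro t ⟨r, hr, s, hs, hrs⟩
    obtain ⟨t', ht', h'⟩ := h r hr s hs
    rw [hrs] at h'
    cases h'
    exact ht'

lemma setOf_const_mem_filt {V : Set A} (hV : V ∈ R.filt) :
    {w | ∃ v ∈ V, ∀ x, R.app w x = some v} ∈ R.filt :=
  mem_filt_of_forall_app R (projSet_mem R 0) hV fun k hk v hv => by
    obtain ⟨d, hd, hdy⟩ := projSet_app R 0 k hk v
    exact ⟨d, ⟨v, hv, hdy⟩, hd⟩

end Combinatory

section Assemblies

open Limits

variable {R : PCA A}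

@[ext]
lemma Asm.hom_ext {X Y : Asm R} {f g : X ⟶ Y} (h : ∀ x, f.1 x = g.1 x) : f = g :=
  Subtype.ext (funext h)

lemma Asm.congr_hom {X Y : Asm R} {f g : X ⟶ Y} (h : f = g) (x : X.carrier) : f.1 x = g.1 x := by
  rw [h]

@[simp]
lemma Asm.comp_apply {X Y Z : Asm R} (f : X ⟶ Y) (g : Y ⟶ Z) (x : X.carrier) :
    (f ≫ g).1 x = g.1 (f.1 x) :=
  rfl

lemma Tracks.mono {X Y Z : Asm R} {U : Set A} {g : X.carrier → Y.carrier}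
    {h : X.carrier → Z.carrier} (hg : Tracks R U g) (hE : ∀ x b, Y.E (g x) b → Z.E (h x) b) :
    Tracks R U h := fun x a r hx hr =>
  (hg x a r hx hr).imp fun b hb => ⟨hb.1, hE x b hb.2⟩

lemma exists_tracks_of_forall_E {X Y : Asm R} (g : X.carrier → Y.carrier)
    (h : ∀ x a, X.E x a → Y.E (g x) a) : ∃ U ∈ R.filt, Tracks R U g :=
  let ⟨U, hU, hI⟩ := exists_ireal R
  ⟨U, hU, fun x a r hx hr => ⟨a, hI r hr a, h x a hx⟩⟩

def subAsm (Z : Asm R) (S : Set Z.carrier) : Asm R where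
  carrier := S
  E z c := Z.E z.1 c
  total z := Z.total z.1

def subIncl (Z : Asm R) (S : Set Z.carrier) : subAsm Z S ⟶ Z :=
  ⟨Subtype.val, exists_tracks_of_forall_E _ fun _ _ h => h⟩

def subLift {W Z : Asm R} (m : W ⟶ Z) {S : Set Z.carrier} (h : ∀ w, m.1 w ∈ S) :
    W ⟶ subAsm Z S :=
  ⟨fun w => ⟨m.1 w, h w⟩, m.2⟩

@[simp]
lemma subIncl_apply (Z : Asm R) (S : Set Z.carrier) (z : S) : (subIncl Z S).1 z = z.1 :=
  rfl

def prodAsm (X Y : Asm R) : Asm R where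
  carrier := X.carrier × Y.carrier
  E z c := ∃ a b, X.E z.1 a ∧ Y.E z.2 b ∧ PairCode R a b c
  total z :=
    let ⟨a, ha⟩ := X.total z.1
    let ⟨b, hb⟩ := Y.total z.2
    let ⟨c, hc⟩ := PairCode.exists a b
    ⟨c, a, b, ha, hb, hc⟩

def prodFst (X Y : Asm R) : prodAsm X Y ⟶ X :=
  ⟨Prod.fst, let ⟨W, hW, hproj⟩ := exists_pairProj_tracker R 0
    ⟨W, hW, fun _ _ w ⟨a, _, ha, _, hc⟩ hw => ⟨a, hproj w hw _ _ _ hc, ha⟩⟩⟩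

def prodSnd (X Y : Asm R) : prodAsm X Y ⟶ Y :=
  ⟨Prod.snd, let ⟨W, hW, hproj⟩ := exists_pairProj_tracker R 1
    ⟨W, hW, fun _ _ w ⟨_, b, _, hb, hc⟩ hw => ⟨b, hproj w hw _ _ _ hc, hb⟩⟩⟩

def prodLift {Z X Y : Asm R} (f : Z ⟶ X) (g : Z ⟶ Y) : Z ⟶ prodAsm X Y := by
  refine ⟨fun z => (f.1 z, g.1 z), ?_⟩
  obtain ⟨U, hU, hf⟩ := f.2
  obtain ⟨V, hV, hg⟩ := g.2
  obtain ⟨W, hW, hspec⟩ := exists_tracker_of_term R (n := 3) (m := 0)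
    (.op (.op (.var 0) (.op (.var 1) (.var 3))) (.op (.var 2) (.var 3)))
    ![pairSet R, U, V] (by intro i; fin_cases i; exacts [pairSet_mem R, hU, hV])
  refine ⟨W, hW, fun z e w hz hw => ?_⟩
  obtain ⟨u, hu, hkey⟩ := hspec w hw
  obtain ⟨a, hfa, hXa⟩ := hf z e (u 1) hz (hu 1)
  obtain ⟨b, hgb, hYb⟩ := hg z e (u 2) hz (hu 2)
  obtain ⟨c, hc, -⟩ := pairSet_app R (u 0) (hu 0) a b
  refine ⟨c, hkey ![u 0, u 1, u 2, e] (by intro i; fin_cases i <;> rfl) c ?_,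
    a, b, hXa, hYb, u 0, hu 0, hc⟩
  simpa [Term.eval, hfa, hgb] using hc

def prodFan (X Y : Asm R) : BinaryFan X Y := BinaryFan.mk (prodFst X Y) (prodSnd X Y)

def prodFanIsLimit (X Y : Asm R) : IsLimit (prodFan X Y) :=
  BinaryFan.isLimitMk (fun s => prodLift s.fst s.snd) (fun _ => rfl) (fun _ => rfl)
    fun _ _ h1 h2 => Asm.hom_ext fun z => Prod.ext (Asm.congr_hom h1 z) (Asm.congr_hom h2 z)

def oneAsm (R : PCA A) : Asm R := nablaObj R PUnit

def oneIsTerminal : IsTerminal (oneAsm R) :=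
  IsTerminal.ofUniqueHom
    (fun _ => ⟨fun _ => PUnit.unit, exists_tracks_of_forall_E _ fun _ _ _ => trivial⟩)
    fun _ _ => Asm.hom_ext fun _ => rfl

def pbAsm {X Y Z : Asm R} (f : X ⟶ Z) (g : Y ⟶ Z) : Asm R :=
  subAsm (prodAsm X Y) {p | f.1 p.1 = g.1 p.2}

def pbFst {X Y Z : Asm R} (f : X ⟶ Z) (g : Y ⟶ Z) : pbAsm f g ⟶ X :=
  subIncl _ _ ≫ prodFst X Y

def pbSnd {X Y Z : Asm R} (f : X ⟶ Z) (g : Y ⟶ Z) : pbAsm f g ⟶ Y :=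
  subIncl _ _ ≫ prodSnd X Y

lemma pbFst_comp_eq {X Y Z : Asm R} (f : X ⟶ Z) (g : Y ⟶ Z) :
    pbFst f g ≫ f = pbSnd f g ≫ g :=
  Asm.hom_ext fun p => p.2

lemma isPullback_pb {X Y Z : Asm R} (f : X ⟶ Z) (g : Y ⟶ Z) :
    IsPullback (pbFst f g) (pbSnd f g) f g :=
  .of_isLimit <| PullbackCone.IsLimit.mk (pbFst_comp_eq f g)
    (fun s => subLift (prodLift s.fst s.snd) (Asm.congr_hom s.condition))
    (fun _ => rfl) (fun _ => rfl)
    fun _ _ h1 h2 => Asm.hom_ext fun w =>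
      Subtype.ext (Prod.ext (Asm.congr_hom h1 w) (Asm.congr_hom h2 w))

instance : HasTerminal (Asm R) := oneIsTerminal.hasTerminal

instance : HasPullbacks (Asm R) :=
  @hasPullbacks_of_hasLimit_cospan _ _ fun {_ _ _ f g} => (isPullback_pb f g).hasPullback

def charMap (Z : Asm R) (S : Set Z.carrier) : Z ⟶ nablaObj R Prop :=
  ⟨(· ∈ S), exists_tracks_of_forall_E _ fun _ _ _ => trivial⟩

lemma subIncl_charMap (Z : Asm R) (S : Set Z.carrier) :
    subIncl Z S ≫ charMap Z S = subIncl Z S ≫ charMap Z Set.univ :=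
  Asm.hom_ext fun z => propext (iff_of_true z.2 trivial)

def subForkIsLimit (Z : Asm R) (S : Set Z.carrier) :
    IsLimit (Fork.ofι (subIncl Z S) (subIncl_charMap Z S)) :=
  Fork.IsLimit.mk _
    (fun s => subLift s.ι fun w => (Asm.congr_hom s.condition w).mpr trivial)
    (fun _ => rfl) fun _ _ hm => Asm.hom_ext fun w => Subtype.ext (Asm.congr_hom hm w)

end Assemblies

section RegularEpi

open Limits

variable {R : PCA A} {X Y Z : Asm R}

/-- The image of `e`, with the realizers of the preimages of a point as its realizers. -/
def imageAsm (e : X ⟶ Y) : Asm R where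
  carrier := Set.range e.1
  E y c := ∃ x, e.1 x = y.1 ∧ X.E x c
  total := fun ⟨_, x, hx⟩ => (X.total x).imp fun _ hc => ⟨x, hx, hc⟩

def toImage (e : X ⟶ Y) : X ⟶ imageAsm e :=
  ⟨fun x => ⟨e.1 x, x, rfl⟩, exists_tracks_of_forall_E _ fun x _ hc => ⟨x, rfl, hc⟩⟩

noncomputable def imageDesc (e : X ⟶ Y) (g : X ⟶ Z)
    (hg : ∀ x x', e.1 x = e.1 x' → g.1 x = g.1 x') : imageAsm e ⟶ Z := by
  refine ⟨fun y => g.1 y.2.choose, ?_⟩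
  obtain ⟨V, hV, hgV⟩ := g.2
  refine ⟨V, hV, fun y c r ⟨x, hx, hc⟩ hr => ?_⟩
  show ∃ b, R.app r c = some b ∧ Z.E (g.1 y.2.choose) b
  rw [← hg x _ (hx.trans y.2.choose_spec.symm)]
  exact hgV x c r hc hr

def HasImageSection (e : X ⟶ Y) : Prop :=
  ∃ s : Y ⟶ imageAsm e, ∀ y, (s.1 y).1 = y

lemma surjective_of_epi (e : X ⟶ Y) [Epi e] : Function.Surjective e.1 := by
  have h : charMap Y (Set.range e.1) = charMap Y Set.univ :=
    (cancel_epi e).mp (Asm.hom_ext fun x => propext (iff_of_true ⟨x, rfl⟩ trivial))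
  exact fun y => (Asm.congr_hom h y).mpr trivial

lemma hasImageSection_of_regularEpi (e : X ⟶ Y) (he : RegularEpi e) : HasImageSection e := by
  have := he.epi
  let s := Cofork.IsColimit.desc he.isColimit (toImage e)
    (Asm.hom_ext fun w => Subtype.ext (Asm.congr_hom he.w w))
  have hs : e ≫ s = toImage e := Cofork.IsColimit.π_desc he.isColimit
  refine ⟨s, fun y => ?_⟩
  obtain ⟨x, rfl⟩ := surjective_of_epi e y
  exact congrArg Subtype.val (Asm.congr_hom hs x)

/-- The kernel pair of `e` is coequalized by `e`, with descent through the image section. -/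
lemma nonempty_regularEpi_of_hasImageSection (e : X ⟶ Y) (he : HasImageSection e) :
    Nonempty (RegularEpi e) := by
  obtain ⟨s, hs⟩ := he
  have hdesc (t : Cofork (pbFst e e) (pbSnd e e)) (x x' : X.carrier) (h : e.1 x = e.1 x') :
      t.π.1 x = t.π.1 x' :=
    Asm.congr_hom t.condition ⟨(x, x'), h⟩
  refine ⟨⟨pbAsm e e, pbFst e e, pbSnd e e, pbFst_comp_eq e e, Cofork.IsColimit.mk _
    (fun t => s ≫ imageDesc e t.π (hdesc t)) (fun t => Asm.hom_ext fun x => ?_)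
    fun t m hm => Asm.hom_ext fun y => ?_⟩⟩
  · exact hdesc t _ _ (((s.1 (e.1 x)).2.choose_spec).trans (hs _))
  · have hy : e.1 (s.1 y).2.choose = y := (s.1 y).2.choose_spec.trans (hs y)
    exact (congrArg m.1 hy).symm.trans (Asm.congr_hom hm _)

lemma nonempty_regularEpi_iff (e : X ⟶ Y) : Nonempty (RegularEpi e) ↔ HasImageSection e :=
  ⟨fun ⟨he⟩ => hasImageSection_of_regularEpi e he, nonempty_regularEpi_of_hasImageSection e⟩

end RegularEpi

section Forward

open Limits

variable {P : PCA A} {Q : PCA B} {f : A → B → Prop} (hf : IsAppMor P.app P.filt Q.app Q.filt f)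

lemma exists_tracks_asmFunctor_nabla {X : Asm Q} {Y : Type} (g : X.carrier → Y) :
    ∃ W ∈ Q.filt, Tracks Q (Y := (asmFunctor hf).obj (nablaObj P Y)) W g :=
  ⟨_, setOf_const_mem_filt Q (hf.image _ (univ_mem_filt P)),
    fun _ b _ _ ⟨_, ⟨a, _, hav⟩, hw⟩ => ⟨_, hw b, a, trivial, hav⟩⟩

def isTerminalAsmFunctorOne : IsTerminal ((asmFunctor hf).obj (oneAsm P)) :=
  IsTerminal.ofUniqueHom (fun _ => ⟨fun _ => PUnit.unit, exists_tracks_asmFunctor_nabla hf _⟩)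
    fun _ _ => Asm.hom_ext fun _ => rfl

/-- Pairs are realized by applying the tracker of `f` twice to an `f`-image of a pairing
combinator of `A`. -/
def asmProdComparison (X Y : Asm P) :
    prodAsm ((asmFunctor hf).obj X) ((asmFunctor hf).obj Y) ⟶
      (asmFunctor hf).obj (prodAsm X Y) := by
  refine ⟨id, ?_⟩
  obtain ⟨T, hT, htr⟩ := hf.tracked
  obtain ⟨W, hW, hspec⟩ := exists_tracker_of_term Q (n := 4) (m := 0)
    (.op (.op (.var 0) (.op (.op (.var 0) (.var 1)) (.op (.var 4) (.var 2))))
      (.op (.var 4) (.var 3)))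
    ![T, relImage f (pairSet P), projSet Q 0, projSet Q 1]
    (by
      intro i; fin_cases i
      exacts [hT, hf.image _ (pairSet_mem P), projSet_mem Q 0, projSet_mem Q 1])
  refine ⟨W, hW, fun z d w ⟨b, b', ⟨a, hXa, hfa⟩, ⟨a', hYa', hfa'⟩, hd⟩ hw => ?_⟩
  obtain ⟨u, hu, hkey⟩ := hspec w hw
  obtain ⟨p, hp, hfp⟩ := hu 1
  obtain ⟨c, hc, -⟩ := pairSet_app P p hp a a'
  obtain ⟨pa, hpa, hpa'⟩ := Option.bind_eq_some_iff.mp hc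
  obtain ⟨d₁, e₁, hd₁, he₁, hfe₁⟩ := htr p a pa hpa (u 1) b hfp hfa (u 0) (hu 0)
  obtain ⟨d₂, e₂, hd₂, he₂, hfe₂⟩ := htr pa a' c hpa' e₁ b' hfe₁ hfa' (u 0) (hu 0)
  refine ⟨e₂, hkey ![u 0, u 1, u 2, u 3, d] (by intro i; fin_cases i <;> rfl) e₂ ?_,
    c, ⟨a, a', hXa, hYa', p, hp, hc⟩, hfe₂⟩
  simp [Term.eval, hd.proj 0 _ (hu 2), hd.proj 1 _ (hu 3), hd₁, he₁, hd₂, he₂]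

lemma isPullback_asmFunctor_map_pb {X Y Z : Asm P} (g : X ⟶ Z) (h : Y ⟶ Z) :
    IsPullback ((asmFunctor hf).map (pbFst g h)) ((asmFunctor hf).map (pbSnd g h))
      ((asmFunctor hf).map g) ((asmFunctor hf).map h) := by
  have w : (asmFunctor hf).map (pbFst g h) ≫ (asmFunctor hf).map g =
      (asmFunctor hf).map (pbSnd g h) ≫ (asmFunctor hf).map h :=
    Asm.hom_ext fun p => p.2
  exact .of_isLimit <| PullbackCone.IsLimit.mk w
    (fun s => subLift (prodLift s.fst s.snd ≫ asmProdComparison hf X Y)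
      (Asm.congr_hom s.condition))
    (fun _ => rfl) (fun _ => rfl)
    fun _ _ h1 h2 => Asm.hom_ext fun t =>
      Subtype.ext (Prod.ext (Asm.congr_hom h1 t) (Asm.congr_hom h2 t))

lemma preservesFiniteLimits_asmFunctor : PreservesFiniteLimits (asmFunctor hf) := by
  have : PreservesLimit (Functor.empty.{0} (Asm P)) (asmFunctor hf) :=
    preservesLimit_of_preserves_limit_cone oneIsTerminal
      ((isLimitMapConeEmptyConeEquiv _ _).symm (isTerminalAsmFunctorOne hf))
  have := preservesLimitsOfShape_pempty_of_preservesTerminal (asmFunctor hf)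
  have := preservesLimitsOfShape_walkingCospan_of_forall_isPullback
    fun _ _ _ g h _ => ⟨_, _, _, isPullback_pb g h, isPullback_asmFunctor_map_pb hf g h⟩
  exact preservesFiniteLimits_of_preservesTerminal_and_pullbacks _

lemma HasImageSection.asmFunctor_map {X Y : Asm P} {e : X ⟶ Y} (he : HasImageSection e) :
    HasImageSection ((asmFunctor hf).map e) := by
  obtain ⟨s, hs⟩ := he
  exact ⟨(asmFunctor hf).map s ≫ ⟨id, exists_tracks_of_forall_E _
    fun _ _ ⟨a, ⟨x, hx, ha⟩, hab⟩ => ⟨x, hx, a, ha, hab⟩⟩, hs⟩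

def asmFunctorGamIso : asmFunctor hf ⋙ Gam Q ≅ Gam P :=
  NatIso.ofComponents (fun X => Iso.refl X.carrier) fun _ => rfl

def asmFunctorNabIso : Nab P ⋙ asmFunctor hf ≅ Nab Q :=
  NatIso.ofComponents (fun _ =>
    { hom := ⟨id, exists_tracks_of_forall_E _ fun _ _ _ => trivial⟩
      inv := ⟨id, exists_tracks_asmFunctor_nabla hf id⟩
      hom_inv_id := rfl
      inv_hom_id := rfl }) fun _ => rfl

end Forward

section RealizerAsm

variable {P : PCA A}

/-- `A*`: every element of `A` is realized by itself. -/
abbrev realizerAsm (P : PCA A) : Asm P := ⟨A, fun a b => b = a, fun a => ⟨a, rfl⟩⟩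

def appMap (P : PCA A) :
    subAsm (prodAsm (realizerAsm P) (realizerAsm P)) {p | (P.app p.1 p.2).isSome} ⟶
      realizerAsm P := by
  refine ⟨fun p => (P.app p.1.1 p.1.2).get p.2, ?_⟩
  obtain ⟨W, hW, hspec⟩ := exists_tracker_of_term P (n := 2) (m := 0)
    (.op (.op (.var 2) (.var 0)) (.op (.var 2) (.var 1))) ![projSet P 0, projSet P 1]
    (by intro i; fin_cases i; exacts [projSet_mem P 0, projSet_mem P 1])
  refine ⟨W, hW, fun p c w ⟨a, a', ha, ha', hc⟩ hw => ?_⟩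
  obtain ⟨u, hu, hkey⟩ := hspec w hw
  subst ha ha'
  refine ⟨_, hkey ![u 0, u 1, c] (by intro i; fin_cases i <;> rfl) _ ?_, rfl⟩
  simp [Term.eval, hc.proj 0 _ (hu 0), hc.proj 1 _ (hu 1)]

def graphAsm (X : Asm P) : Asm P :=
  subAsm (prodAsm (nablaObj P X.carrier) (realizerAsm P)) {p | X.E p.1 p.2}

def graphSnd (X : Asm P) : graphAsm X ⟶ realizerAsm P :=
  subIncl _ _ ≫ prodSnd _ _

def graphFst (X : Asm P) : graphAsm X ⟶ X := by
  refine ⟨fun p => p.1.1, ?_⟩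
  obtain ⟨U, hU, h⟩ := (graphSnd X).2
  exact ⟨U, hU, h.mono fun p b hb => by rw [hb]; exact p.2⟩

lemma hasImageSection_graphFst (X : Asm P) : HasImageSection (graphFst X) := by
  obtain ⟨W, hW, hspec⟩ := exists_tracker_of_term P (n := 1) (m := 0)
    (.op (.op (.var 0) (.var 1)) (.var 1)) ![pairSet P]
    (by intro i; fin_cases i; exact pairSet_mem P)
  refine ⟨⟨fun x => ⟨x, ⟨(x, (X.total x).choose), (X.total x).choose_spec⟩, rfl⟩,
    W, hW, fun x b w hb hw => ?_⟩, fun _ => rfl⟩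
  obtain ⟨u, hu, hkey⟩ := hspec w hw
  obtain ⟨c, hc, -⟩ := pairSet_app P (u 0) (hu 0) b b
  exact ⟨c, hkey ![u 0, b] (by intro i; fin_cases i; rfl) c (by simpa [Term.eval] using hc),
    ⟨(x, b), hb⟩, rfl, b, b, trivial, rfl, u 0, hu 0, hc⟩

end RealizerAsm

section Backward

open Limits

variable {P : PCA A} {Q : PCA B} {F : Asm P ⥤ Asm Q} (η : F ⋙ Gam Q ≅ Gam P)

def PreservesRegularEpis {C D : Type*} [Category C] [Category D] (G : C ⥤ D) : Prop :=
  ∀ (X Y : C) (e : X ⟶ Y), Nonempty (RegularEpi e) → Nonempty (RegularEpi (G.map e))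

def carrierEquiv (X : Asm P) : (F.obj X).carrier ≃ X.carrier := (η.app X).toEquiv

lemma carrierEquiv_map {X Y : Asm P} (g : X ⟶ Y) (z : (F.obj X).carrier) :
    carrierEquiv η Y ((F.map g).1 z) = g.1 (carrierEquiv η X z) :=
  ConcreteCategory.congr_hom (η.hom.naturality g) z

lemma map_carrierEquiv_symm {X Y : Asm P} (g : X ⟶ Y) (x : X.carrier) :
    (F.map g).1 ((carrierEquiv η X).symm x) = (carrierEquiv η Y).symm (g.1 x) := by
  rw [Equiv.eq_symm_apply, carrierEquiv_map, Equiv.apply_symm_apply]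

noncomputable def subAsmComparison (hF : PreservesFiniteLimits F) (Z : Asm P)
    (S : Set Z.carrier) :
    subAsm (F.obj Z) {z | carrierEquiv η Z z ∈ S} ⟶ F.obj (subAsm Z S) :=
  have := hF.preservesFiniteLimits WalkingParallelPair
  (Fork.IsLimit.lift' (isLimitForkMapOfIsLimit F _ (subForkIsLimit Z S)) (subIncl _ _)
    (Asm.hom_ext fun z => (carrierEquiv η _).injective <| by
      simp only [Asm.comp_apply, carrierEquiv_map]
      exact propext (iff_of_true z.2 trivial))).1

lemma carrierEquiv_subAsmComparison (hF : PreservesFiniteLimits F) (Z : Asm P)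
    (S : Set Z.carrier) (z : {z | carrierEquiv η Z z ∈ S}) :
    (carrierEquiv η _ ((subAsmComparison η hF Z S).1 z)).1 = carrierEquiv η Z z.1 := by
  have := hF.preservesFiniteLimits WalkingParallelPair
  exact (carrierEquiv_map η (subIncl Z S) _).symm.trans <| congrArg _ <|
    Asm.congr_hom (Fork.IsLimit.lift' (isLimitForkMapOfIsLimit F _ (subForkIsLimit Z S))
      (subIncl _ _) _).2 z

noncomputable def prodAsmComparison (hF : PreservesFiniteLimits F) (X Y : Asm P) :
    prodAsm (F.obj X) (F.obj Y) ⟶ F.obj (prodAsm X Y) :=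
  have := hF.preservesFiniteLimits (Discrete WalkingPair)
  (BinaryFan.IsLimit.lift' (mapIsLimitOfPreservesOfIsLimit F _ _ (prodFanIsLimit X Y))
    (prodFst _ _) (prodSnd _ _)).1

lemma carrierEquiv_prodAsmComparison (hF : PreservesFiniteLimits F) (X Y : Asm P)
    (z : (prodAsm (F.obj X) (F.obj Y)).carrier) :
    carrierEquiv η _ ((prodAsmComparison hF X Y).1 z) =
      (carrierEquiv η X z.1, carrierEquiv η Y z.2) := by
  have := hF.preservesFiniteLimits (Discrete WalkingPair)
  have h := (BinaryFan.IsLimit.lift' (mapIsLimitOfPreservesOfIsLimit F _ _ (prodFanIsLimit X Y))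
    (prodFst (F.obj X) (F.obj Y)) (prodSnd _ _)).2
  exact Prod.ext
    ((carrierEquiv_map η (prodFst X Y) _).symm.trans (congrArg _ (Asm.congr_hom h.1 z)))
    ((carrierEquiv_map η (prodSnd X Y) _).symm.trans (congrArg _ (Asm.congr_hom h.2 z)))

noncomputable def subProdComparison (hF : PreservesFiniteLimits F) (X Y : Asm P)
    (S : Set (X.carrier × Y.carrier)) :
    subAsm (prodAsm (F.obj X) (F.obj Y))
        {p | (carrierEquiv η X p.1, carrierEquiv η Y p.2) ∈ S} ⟶
      F.obj (subAsm (prodAsm X Y) S) :=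
  subLift (subIncl _ _ ≫ prodAsmComparison hF X Y) (S := {z | carrierEquiv η _ z ∈ S})
      (fun p => by
        show carrierEquiv η (prodAsm X Y) ((prodAsmComparison hF X Y).1 p.1) ∈ S
        rw [carrierEquiv_prodAsmComparison]
        exact p.2) ≫
    subAsmComparison η hF (prodAsm X Y) S

lemma symm_mem_subProd {X Y : Asm P} {S : Set (X.carrier × Y.carrier)} {x : X.carrier}
    {y : Y.carrier} (h : (x, y) ∈ S) :
    ((carrierEquiv η X).symm x, (carrierEquiv η Y).symm y) ∈
      {p : (prodAsm (F.obj X) (F.obj Y)).carrier |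
        (carrierEquiv η X p.1, carrierEquiv η Y p.2) ∈ S} := by
  show (_, _) ∈ S
  simpa using h

lemma map_subProdComparison (hF : PreservesFiniteLimits F) {X Y Z : Asm P}
    {S : Set (X.carrier × Y.carrier)} (g : subAsm (prodAsm X Y) S ⟶ Z) {x : X.carrier}
    {y : Y.carrier} (h : (x, y) ∈ S) :
    (F.map g).1 ((subProdComparison η hF X Y S).1
      ⟨((carrierEquiv η X).symm x, (carrierEquiv η Y).symm y), symm_mem_subProd η h⟩) =
      (carrierEquiv η Z).symm (g.1 ⟨(x, y), h⟩) := by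
  rw [Equiv.eq_symm_apply, carrierEquiv_map]
  refine congrArg g.1 (Subtype.ext ?_)
  refine (carrierEquiv_subAsmComparison η hF (prodAsm X Y) S _).trans ?_
  exact (carrierEquiv_prodAsmComparison η hF X Y _).trans
    (Prod.ext ((carrierEquiv η X).apply_symm_apply x) ((carrierEquiv η Y).apply_symm_apply y))

def inducedRel : A → B → Prop :=
  fun a b => (F.obj (realizerAsm P)).E ((carrierEquiv η _).symm a) b

/-- Application of `A` on the defined pairs, transported along `F`, tracks `inducedRel`. -/
lemma inducedRel_tracked (hF : PreservesFiniteLimits F) :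
    ∃ T ∈ Q.filt, Tracks₂ P.app Q.app T (inducedRel η) := by
  obtain ⟨T, hT, hm⟩ := (subProdComparison η hF _ _ _ ≫ F.map (appMap P)).2
  obtain ⟨W, hW, hspec⟩ := exists_tracker_of_term Q (n := 2) (m := 1)
    (.op (.var 0) (.op (.op (.var 1) (.var 2)) (.var 3))) ![T, pairSet Q]
    (by intro i; fin_cases i; exacts [hT, pairSet_mem Q])
  refine ⟨W, hW, fun a a' c hc b b' hb hb' w hw => ?_⟩
  obtain ⟨u, hu, hkey⟩ := hspec w hw
  obtain ⟨d, hd, -⟩ := pairSet_app Q (u 1) (hu 1) b b'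
  have hdef : (P.app a a').isSome := by simp [hc]
  obtain ⟨e, he, hE⟩ := hm ⟨_, symm_mem_subProd η (X := realizerAsm P) (Y := realizerAsm P)
    (S := {p | (P.app p.1 p.2).isSome}) (x := a) (y := a') hdef⟩ d (u 0)
    ⟨b, b', hb, hb', u 1, hu 1, hd⟩ (hu 0)
  have happ := hkey ![u 0, u 1, b, b'] (by intro i; fin_cases i <;> rfl) e
    (by simp [Term.eval, hd, he])
  obtain ⟨d', hd', he'⟩ := Option.bind_eq_some_iff.mp happ
  refine ⟨d', e, hd', he', ?_⟩
  have happ : (appMap P).1 ⟨(a, a'), hdef⟩ = c := Option.get_of_eq_some hdef hc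
  show (F.obj (realizerAsm P)).E ((carrierEquiv η _).symm c) e
  convert hE using 2
  exact (congrArg _ happ).symm.trans (map_subProdComparison η hF (appMap P) hdef).symm

lemma setOf_forall_E_mem_filt (θ : Nab P ⋙ F ≅ Nab Q) (Y : Type) :
    {c | ∀ z, (F.obj (nablaObj P Y)).E z c} ∈ Q.filt := by
  rcases isEmpty_or_nonempty Y with hY | ⟨⟨y⟩⟩
  · exact Q.isFilter.upward _ (univ_mem_filt Q) _
      fun _ _ z => (hY.false ((θ.app Y).hom.1 z)).elim
  obtain ⟨T, hT, hθ⟩ := (θ.app Y).inv.2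
  refine mem_filt_of_forall_app Q hT (univ_mem_filt Q) fun r hr s _ => ?_
  obtain ⟨d, hd, -⟩ := hθ y s r trivial hr
  refine ⟨d, fun z => ?_, hd⟩
  obtain ⟨d', hd', hE⟩ := hθ ((θ.app Y).hom.1 z) s r trivial hr
  have hz : (θ.app Y).inv.1 ((θ.app Y).hom.1 z) = z := Asm.congr_hom (θ.app Y).hom_inv_id z
  rw [hd, Option.some_inj] at hd'
  rwa [hz, ← hd'] at hE

/-- The map from the subassembly `V ⊆ A*` to `∇1` is a regular epimorphism (a constant
combinator lifts any realizer into `V`), so `F` of it lifts the uniform realizers of the point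
of `F ∇1 ≅ ∇1`; pushing them along `F (V ⊆ A*)` gives a filter set inside `f(V)`. -/
lemma inducedRel_image (θ : Nab P ⋙ F ≅ Nab Q)
    (hepi : PreservesRegularEpis F)
    {V : Set A} (hV : V ∈ P.filt) : relImage (inducedRel η) V ∈ Q.filt := by
  obtain ⟨v, hv⟩ := P.isFilter.nonempty V hV
  let q : subAsm (realizerAsm P) V ⟶ oneAsm P := oneIsTerminal.from _
  have hq : HasImageSection q :=
    ⟨⟨fun _ => ⟨PUnit.unit, ⟨v, hv⟩, rfl⟩, _, setOf_const_mem_filt P hV,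
      fun _ b _ _ ⟨v', hv', hr⟩ => ⟨v', hr b, ⟨v', hv'⟩, rfl, rfl⟩⟩, fun _ => rfl⟩
  obtain ⟨s, -⟩ := (nonempty_regularEpi_iff _).mp
    (hepi _ _ q ((nonempty_regularEpi_iff q).mpr hq))
  obtain ⟨U, hU, hs⟩ := s.2
  have hpoints : {c | ∃ x, (F.obj (subAsm (realizerAsm P) V)).E x c} ∈ Q.filt :=
    mem_filt_of_forall_app Q hU (setOf_forall_E_mem_filt θ PUnit) fun r hr c hc => by
      obtain ⟨d, hd, x, -, hx⟩ := hs ((carrierEquiv η _).symm PUnit.unit) c r (hc _) hr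
      exact ⟨d, ⟨x, hx⟩, hd⟩
  obtain ⟨T, hT, hι⟩ := (F.map (subIncl (realizerAsm P) V)).2
  refine mem_filt_of_forall_app Q hT hpoints fun r hr c ⟨x, hx⟩ => ?_
  obtain ⟨d, hd, hE⟩ := hι x c r hx hr
  refine ⟨d, ⟨(carrierEquiv η _ x).1, (carrierEquiv η _ x).2, ?_⟩, hd⟩
  have hιx := map_carrierEquiv_symm η (subIncl (realizerAsm P) V) (carrierEquiv η _ x)
  rw [Equiv.symm_apply_apply] at hιx
  rw [hιx] at hE
  exact hE

lemma isAppMor_inducedRel (hF : PreservesFiniteLimits F) (θ : Nab P ⋙ F ≅ Nab Q)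
    (hepi : PreservesRegularEpis F) :
    IsAppMor P.app P.filt Q.app Q.filt (inducedRel η) :=
  ⟨fun _ => (F.obj _).total _, inducedRel_tracked η hF,
    fun _ hV => inducedRel_image η θ hepi hV⟩

/-- Every realizer of `z ∈ F X` lifts along the regular epimorphism `F (graphFst X)` to a
realizer of a point of `F (graphAsm X)`, which `F (graphSnd X)` turns into an `f`-image of a
realizer of `carrierEquiv η X z`. -/
def inducedIsoHom (hf : IsAppMor P.app P.filt Q.app Q.filt (inducedRel η))
    (hepi : PreservesRegularEpis F)
    (X : Asm P) : F.obj X ⟶ (asmFunctor hf).obj X := by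
  refine ⟨carrierEquiv η X, ?_⟩
  obtain ⟨s, hs⟩ := (nonempty_regularEpi_iff _).mp
    (hepi _ _ _ ((nonempty_regularEpi_iff _).mpr (hasImageSection_graphFst X)))
  obtain ⟨U, hU, hsU⟩ := s.2
  obtain ⟨T, hT, hsnd⟩ := (F.map (graphSnd X)).2
  obtain ⟨W, hW, hkey⟩ := exists_tracker3 Q (.op (.var 1) (.op (.var 0) (.var 2))) hU hT
  refine ⟨W, hW, fun z b w hb hw => ?_⟩
  obtain ⟨u, hu, t, ht, key⟩ := hkey w hw
  obtain ⟨c, hc, p, hp, hpc⟩ := hsU z b u hb hu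
  obtain ⟨d, hd, hE⟩ := hsnd p c t hpc ht
  refine ⟨d, key b d (by rw [eval_comp_term, hc]; exact hd), (carrierEquiv η _ p).1.2, ?_, ?_⟩
  · have hz : (F.map (graphFst X)).1 p = z := hp.trans (hs z)
    rw [← hz, carrierEquiv_map]
    exact (carrierEquiv η _ p).2
  · have hsndp := map_carrierEquiv_symm η (graphSnd X) (carrierEquiv η _ p)
    rw [Equiv.symm_apply_apply] at hsndp
    rw [hsndp] at hE
    exact hE

/-- A realizer of `x` paired with a uniform realizer of the points of `F (∇X)` realizes a point
of `F (graphAsm X)` lying over `x`. -/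
def inducedIsoInv (hF : PreservesFiniteLimits F) (θ : Nab P ⋙ F ≅ Nab Q)
    (hf : IsAppMor P.app P.filt Q.app Q.filt (inducedRel η)) (X : Asm P) :
    (asmFunctor hf).obj X ⟶ F.obj X := by
  refine ⟨(carrierEquiv η X).symm, ?_⟩
  obtain ⟨T, hT, hm⟩ := (subProdComparison η hF (nablaObj P X.carrier) (realizerAsm P)
    {p | X.E p.1 p.2} ≫ F.map (graphFst X)).2
  obtain ⟨W, hW, hspec⟩ := exists_tracker_of_term Q (n := 3) (m := 0)
    (.op (.var 0) (.op (.op (.var 1) (.var 2)) (.var 3)))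
    ![T, pairSet Q, {c | ∀ z, (F.obj (nablaObj P X.carrier)).E z c}]
    (by intro i; fin_cases i; exacts [hT, pairSet_mem Q, setOf_forall_E_mem_filt θ _])
  refine ⟨W, hW, fun x b w ⟨a, hxa, hab⟩ hw => ?_⟩
  obtain ⟨u, hu, hkey⟩ := hspec w hw
  have hv : ∀ z, (F.obj (nablaObj P X.carrier)).E z (u 2) := hu 2
  obtain ⟨c, hc, -⟩ := pairSet_app Q (u 1) (hu 1) (u 2) b
  obtain ⟨d, hd, hE⟩ := hm ⟨_, symm_mem_subProd η (X := nablaObj P X.carrier)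
    (Y := realizerAsm P) (S := {p | X.E p.1 p.2}) (x := x) (y := a) hxa⟩ c (u 0)
    ⟨u 2, b, hv _, hab, u 1, hu 1, hc⟩ (hu 0)
  refine ⟨d, hkey ![u 0, u 1, u 2, b] (by intro i; fin_cases i <;> rfl) d
    (by simp [Term.eval, hc, hd]), ?_⟩
  convert hE using 1
  exact (map_subProdComparison η hF (graphFst X) hxa).symm

def inducedIso (hF : PreservesFiniteLimits F) (θ : Nab P ⋙ F ≅ Nab Q)
    (hepi : PreservesRegularEpis F)
    (hf : IsAppMor P.app P.filt Q.app Q.filt (inducedRel η)) : F ≅ asmFunctor hf :=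
  NatIso.ofComponents (fun X =>
    { hom := inducedIsoHom η hf hepi X
      inv := inducedIsoInv η hF θ hf X
      hom_inv_id := Asm.hom_ext fun z => (carrierEquiv η X).symm_apply_apply z
      inv_hom_id := Asm.hom_ext fun x => (carrierEquiv η X).apply_symm_apply x })
    fun g => Asm.hom_ext fun z => carrierEquiv_map η g z

end Backward

/-- A functor `F : Asm(A,φ) ⥤ Asm(B,ψ)` is naturally isomorphic to
`Asm(f)` for some applicative morphism `f` iff `F` is regular (preserves finite limits and
regular epimorphisms), `Γ_B ∘ F ≅ Γ_A` and `F ∘ ∇_A ≅ ∇_B`. -/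
theorem statement10 (A B : Type) (P : PCA A) (Q : PCA B) (F : Asm P ⥤ Asm Q) :
    (∃ (f : A → B → Prop) (hf : IsAppMor P.app P.filt Q.app Q.filt f),
        Nonempty (F ≅ asmFunctor hf)) ↔
      (Nonempty (Limits.PreservesFiniteLimits F) ∧
       (∀ (X Y : Asm P) (e : X ⟶ Y), Nonempty (RegularEpi e) →
          Nonempty (RegularEpi (F.map e))) ∧
       Nonempty (F ⋙ Gam Q ≅ Gam P) ∧
       Nonempty (Nab P ⋙ F ≅ Nab Q)) := by
  constructor
  · rintro ⟨f, hf, ⟨φ⟩⟩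
    have := preservesFiniteLimits_asmFunctor hf
    refine ⟨⟨Limits.preservesFiniteLimits_of_natIso φ.symm⟩, fun X Y e he => ?_,
      ⟨Functor.isoWhiskerRight φ (Gam Q) ≪≫ asmFunctorGamIso hf⟩,
      ⟨Functor.isoWhiskerLeft (Nab P) φ ≪≫ asmFunctorNabIso hf⟩⟩
    obtain ⟨h⟩ := (nonempty_regularEpi_iff _).mpr
      (((nonempty_regularEpi_iff e).mp he).asmFunctor_map hf)
    exact ⟨RegularEpi.ofArrowIso (Arrow.isoMk (φ.app X).symm (φ.app Y).symm
      (φ.inv.naturality e).symm) h⟩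
  · rintro ⟨⟨hF⟩, hepi, ⟨η⟩, ⟨θ⟩⟩
    exact ⟨_, isAppMor_inducedRel η hF θ hepi, ⟨inducedIso η hF θ hepi _⟩⟩

end PcaPaper
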